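/- arXiv:2410.14662 — 6 statements merged into one kernel-verified Lean document; each statement's English description precedes it below -/
import Mathlib

section
/- Let G be a finite abelian group, let Γ = (V, E, v₀, v₁) be a finite undirected multigraph with an edge labeling L : E → G, and let Γ̃ be the G-lift of Γ with labeling L. Then the multiset of eigenvalues (with multiplicity) of the adjacency matrix A_Γ̃, regarded as a complex matrix, is the disjoint union over all |G| characters χ of G of the multisets of eigenvalues of the χ-signed adjacency matrices A_{Γ,χ}; equivalently, the characteristic polynomial of A_Γ̃ over ℂ equals the product over all characters χ of G of the characteristic polynomials of A_{Γ,χ}. -/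
open scoped BigOperators
open Matrix Polynomial

/-- The adjacency matrix of the multigraph `(V, E, v0, v1)`, regarded as a complex matrix:
the `(u, w)` entry is the number of edges joining `u` and `w`. -/
noncomputable def adjMatC {V E : Type} (v0 v1 : E → V) : Matrix V V ℂ := fun u w =>
  (Nat.card {e : E // (v0 e = u ∧ v1 e = w) ∨ (v1 e = u ∧ v0 e = w)} : ℂ)

/-- The `χ`-signed adjacency matrix of the multigraph `(V, E, v0, v1)` with edge labeling
`L : E → G`: the `(u, w)` entry is the sum, over directed edges `(e, b)` from `u` to `w`,
of `χ ((-1)^b • L e)`.  The directed edge `(e, false)` goes from `v0 e` to `v1 e` and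
`(e, true)` goes from `v1 e` to `v0 e`. -/
noncomputable def signedAdj {V E G : Type} [Fintype E] [DecidableEq V]
    [AddCommGroup G] (v0 v1 : E → V) (L : E → G) (χ : G → ℂ) :
    Matrix V V ℂ := fun u w =>
  ∑ p : E × Bool,
    if (if p.2 then v1 p.1 else v0 p.1) = u ∧ (if p.2 then v0 p.1 else v1 p.1) = w then
      χ (if p.2 then -L p.1 else L p.1)
    else 0

lemma aux_adj_eq {V E : Type} [DecidableEq V] [Fintype E] (v0 v1 : E → V)
    (h : ∀ e, v0 e ≠ v1 e) (u w : V) :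
    adjMatC v0 v1 u w =
      ∑ e : E, ((if v0 e = u ∧ v1 e = w then (1 : ℂ) else 0) +
        (if v1 e = u ∧ v0 e = w then (1 : ℂ) else 0)) := by
  classical
  rw [adjMatC, Nat.card_eq_fintype_card, Fintype.card_subtype, Finset.card_filter]
  push_cast
  refine Finset.sum_congr rfl fun e _ => ?_
  by_cases h1 : v0 e = u ∧ v1 e = w
  · have h2 : ¬ (v1 e = u ∧ v0 e = w) := fun h2 => h e (h1.1.trans h2.1.symm)
    simp [h1]
    exact fun hwu _ => h e (h1.1.trans ((h1.2.trans hwu)).symm)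
  · by_cases h2 : v1 e = u ∧ v0 e = w
    · simp [h1, h2]
      exact fun hwu _ => h e (h2.2.trans (hwu.trans h2.1.symm))
    · simp [h1, h2]

lemma aux_charpoly_blockDiagonal {n o R : Type} [Fintype n] [DecidableEq n]
    [Fintype o] [DecidableEq o] [CommRing R] (M : o → Matrix n n R) :
    (Matrix.blockDiagonal M).charpoly = ∏ k, (M k).charpoly := by
  rw [Matrix.charpoly]
  have h : (Matrix.blockDiagonal M).charmatrix =
      Matrix.blockDiagonal (fun k => (M k).charmatrix) := by
    ext ⟨i, k⟩ ⟨j, k'⟩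
    by_cases h : k = k' <;>
      simp [Matrix.charmatrix_apply, Matrix.blockDiagonal_apply, h, Matrix.diagonal,
        Prod.ext_iff, Matrix.of_apply]
  rw [h, Matrix.det_blockDiagonal]
  rfl

lemma aux_charpoly_conj {n R : Type} [Fintype n] [DecidableEq n] [CommRing R]
    (P B Q : Matrix n n R) (h1 : P * Q = 1) :
    (P * B * Q).charpoly = B.charpoly := by
  have hmap : ∀ (X Y : Matrix n n R), (X * Y).map (C : R →+* R[X]) = X.map C * Y.map C :=
    fun X Y => Matrix.map_mul
  have hPQ : P.map (C : R →+* R[X]) * Q.map C = 1 := by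
    rw [← hmap, h1]; simp
  have hcomm : Matrix.scalar n (X : R[X]) * P.map C = P.map C * Matrix.scalar n (X : R[X]) :=
    (Matrix.scalar_commute (X : R[X]) (fun r' => Commute.all _ _) (P.map C)).eq
  have hc : charmatrix (P * B * Q) = P.map C * charmatrix B * Q.map C := by
    unfold charmatrix
    rw [mul_sub, sub_mul, RingHom.mapMatrix_apply, RingHom.mapMatrix_apply, hmap, hmap]
    congr 1
    rw [← hcomm, mul_assoc, hPQ, mul_one]
  rw [Matrix.charpoly, hc, Matrix.det_mul, Matrix.det_mul, Matrix.charpoly]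
  have h2 : (P.map (C : R →+* R[X])).det * (Q.map C).det = 1 := by
    rw [← Matrix.det_mul, hPQ, Matrix.det_one]
  calc (P.map (C : R →+* R[X])).det * (charmatrix B).det * (Q.map C).det
      = (charmatrix B).det * ((P.map (C : R →+* R[X])).det * (Q.map C).det) := by ring
    _ = (charmatrix B).det := by rw [h2, mul_one]

/-- spectrum of an abelian lift; Lemma 3.8.  Let `G` be a finite abelian
group, `Γ = (V, E, v0, v1)` a finite multigraph (no self-loops) with edge labeling
`L : E → G`, and `Γ̃` the `G`-lift of `Γ` (vertices `V × G`, edges `E × G`, the edge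
`(e, g)` joining `(v0 e, g)` and `(v1 e, g + L e)`).  Then the multiset of complex
eigenvalues of `A_Γ̃` is the disjoint union over all characters `χ : G → ℂ` of the
eigenvalue multisets of the signed matrices `A_{Γ,χ}`; equivalently, the characteristic
polynomial of `A_Γ̃` over `ℂ` is the product over all characters `χ` of the characteristic
polynomials of `A_{Γ,χ}`. -/
theorem stmt0 {V E G : Type} [Fintype V] [DecidableEq V] [Fintype E]
    [AddCommGroup G] [Fintype G] [DecidableEq G]
    (v0 v1 : E → V) (hloop : ∀ e, v0 e ≠ v1 e) (L : E → G) :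
    Matrix.charpoly
        (adjMatC (fun p : E × G => (v0 p.1, p.2)) (fun p : E × G => (v1 p.1, p.2 + L p.1))) =
      ∏ χ : AddChar G ℂ, Matrix.charpoly (signedAdj v0 v1 L (⇑χ)) := by
  classical
  set A := adjMatC (fun p : E × G => (v0 p.1, p.2)) (fun p : E × G => (v1 p.1, p.2 + L p.1))
    with hA
  let e : G ≃ AddChar G ℂ := (Fintype.equivOfCardEq (AddChar.card_eq (α := G))).symm
  let F : Matrix (V × G) (V × G) ℂ := fun p q => if p.1 = q.1 then e q.2 p.2 else 0
  let D : Matrix (V × G) (V × G) ℂ :=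
    Matrix.blockDiagonal (fun k : G => signedAdj v0 v1 L (⇑(e k)))
  have key : A * F = F * D := by
    ext ⟨u, g⟩ ⟨w, h⟩
    rw [Matrix.mul_apply, Matrix.mul_apply]
    have hR : (∑ x : V × G, F (u, g) x * D x (w, h)) =
        (e h) g * signedAdj v0 v1 L (⇑(e h)) u w := by
      rw [Fintype.sum_prod_type]
      simp only [F, D, Matrix.blockDiagonal_apply, ite_mul, mul_ite, zero_mul, mul_zero,
        Finset.sum_ite_eq, Finset.sum_ite_eq', Finset.mem_univ, if_true]
    have hin : ∀ (P : Prop) [Decidable P] (a : V × G),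
        (∑ x : V × G, (if P ∧ a = x then (1 : ℂ) else 0) * F x (w, h)) =
          if P then F a (w, h) else 0 := by
      intro P _ a
      split_ifs with hP
      · simp [hP, ite_mul, Finset.sum_ite_eq]
      · simp [hP]
    have hL : (∑ x : V × G, A (u, g) x * F x (w, h)) =
        ∑ ed : E, ((if v0 ed = u ∧ v1 ed = w then (e h) (g + L ed) else 0) +
          (if v1 ed = u ∧ v0 ed = w then (e h) (g - L ed) else 0)) := by
      have hAe : ∀ x : V × G, A (u, g) x =
          ∑ c : E × G, ((if (v0 c.1, c.2) = ((u, g) : V × G) ∧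
              (v1 c.1, c.2 + L c.1) = x then (1 : ℂ) else 0) +
            (if (v1 c.1, c.2 + L c.1) = ((u, g) : V × G) ∧
              (v0 c.1, c.2) = x then (1 : ℂ) else 0)) := fun x =>
        aux_adj_eq _ _ (fun c hc => hloop c.1 (congrArg Prod.fst hc)) (u, g) x
      calc (∑ x : V × G, A (u, g) x * F x (w, h))
          = ∑ x : V × G, ∑ c : E × G,
              ((if (v0 c.1, c.2) = ((u, g) : V × G) ∧ (v1 c.1, c.2 + L c.1) = x
                  then (1 : ℂ) else 0) * F x (w, h) +
               (if (v1 c.1, c.2 + L c.1) = ((u, g) : V × G) ∧ (v0 c.1, c.2) = x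
                  then (1 : ℂ) else 0) * F x (w, h)) := by
            refine Finset.sum_congr rfl fun x _ => ?_
            rw [hAe x, Finset.sum_mul]
            exact Finset.sum_congr rfl fun c _ => by rw [add_mul]
        _ = ∑ c : E × G, ∑ x : V × G,
              ((if (v0 c.1, c.2) = ((u, g) : V × G) ∧ (v1 c.1, c.2 + L c.1) = x
                  then (1 : ℂ) else 0) * F x (w, h) +
               (if (v1 c.1, c.2 + L c.1) = ((u, g) : V × G) ∧ (v0 c.1, c.2) = x
                  then (1 : ℂ) else 0) * F x (w, h)) := Finset.sum_comm
        _ = ∑ c : E × G,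
              ((if (v0 c.1, c.2) = ((u, g) : V × G) then F (v1 c.1, c.2 + L c.1) (w, h) else 0) +
               (if (v1 c.1, c.2 + L c.1) = ((u, g) : V × G) then F (v0 c.1, c.2) (w, h) else 0))
            := by
            refine Finset.sum_congr rfl fun c _ => ?_
            rw [Finset.sum_add_distrib, hin, hin]
        _ = ∑ ed : E, ((if v0 ed = u ∧ v1 ed = w then (e h) (g + L ed) else 0) +
              (if v1 ed = u ∧ v0 ed = w then (e h) (g - L ed) else 0)) := by
            rw [Fintype.sum_prod_type]
            refine Finset.sum_congr rfl fun ed _ => ?_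
            rw [Finset.sum_add_distrib]
            congr 1
            · by_cases h0 : v0 ed = u
              · simp only [Prod.mk.injEq, h0, true_and, F]
                rw [Finset.sum_eq_single g]
                · by_cases h1 : v1 ed = w <;> simp [h1]
                · intro b _ hb; simp [hb]
                · intro hg; exact absurd (Finset.mem_univ g) hg
              · simp [Prod.mk.injEq, h0]
            · by_cases h0 : v1 ed = u
              · simp only [Prod.mk.injEq, h0, true_and, F]
                rw [Finset.sum_eq_single (g - L ed)]
                · by_cases h1 : v0 ed = w <;> simp [h1]
                · intro b _ hb
                  have : ¬ (b + L ed = g) := fun hbe => hb (by rw [← hbe]; abel)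
                  simp [this]
                · intro hg; exact absurd (Finset.mem_univ _) hg
              · simp [Prod.mk.injEq, h0]
    rw [hL, hR, signedAdj, Fintype.sum_prod_type, Finset.mul_sum]
    refine Finset.sum_congr rfl fun ed _ => ?_
    rw [Fintype.sum_bool]
    simp only [show (false = true) = False from by simp, show (true = true) = True from by simp,
      if_true, if_false, ite_true, ite_false]
    by_cases h1 : v0 ed = u ∧ v1 ed = w <;> by_cases h2 : v1 ed = u ∧ v0 ed = w <;>
      simp [h1, h2, AddChar.map_add_eq_mul, sub_eq_add_neg, mul_add, add_comm]
  -- invertibility of F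
  have orth : ∀ a : G, (∑ k : G, (e k) a) = if a = 0 then (Fintype.card G : ℂ) else 0 := by
    intro a
    rw [Equiv.sum_comp e (fun χ : AddChar G ℂ => χ a), AddChar.sum_apply_eq_ite]
  let N : Matrix (V × G) (V × G) ℂ := fun p q => if p.1 = q.1 then (e p.2) (-q.2) else 0
  have hc : (Fintype.card G : ℂ) ≠ 0 := Nat.cast_ne_zero.2 Fintype.card_ne_zero
  have hFN : F * N = (Fintype.card G : ℂ) • 1 := by
    ext ⟨u, g⟩ ⟨w, h⟩
    have hmul : ∀ k : G, (e k) g * (e k) (-h) = (e k) (g - h) := fun k => by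
      rw [← AddChar.map_add_eq_mul, ← sub_eq_add_neg]
    rw [Matrix.mul_apply, Fintype.sum_prod_type]
    rw [Finset.sum_eq_single u]
    · by_cases huw : u = w
      · simp only [F, N, huw, if_pos rfl]
        rw [Finset.sum_congr rfl (fun k _ => hmul k), orth]
        by_cases hgh : g = h
        · simp [hgh, Matrix.smul_apply, Matrix.one_apply, huw]
        · have hsub : ¬ (g - h = 0) := fun h0 => hgh (sub_eq_zero.1 h0)
          simp [hsub, Matrix.smul_apply, Matrix.one_apply, Prod.ext_iff, hgh]
      · simp [F, N, huw, Matrix.smul_apply, Matrix.one_apply, Prod.ext_iff]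
    · intro b _ hb
      simp [F, if_neg (Ne.symm hb)]
    · intro hu; exact absurd (Finset.mem_univ u) hu
  have hF1 : F * ((Fintype.card G : ℂ)⁻¹ • N) = 1 := by
    rw [Matrix.mul_smul, hFN, smul_smul, inv_mul_cancel₀ hc, one_smul]
  have : Invertible F := invertibleOfRightInverse _ _ hF1
  have hA' : A = F * D * ⅟F := by
    calc A = A * F * ⅟F := by rw [Matrix.mul_assoc, mul_invOf_self, Matrix.mul_one]
      _ = F * D * ⅟F := by rw [key]
  rw [hA', aux_charpoly_conj _ _ _ (mul_invOf_self F), aux_charpoly_blockDiagonal]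
  exact Fintype.prod_equiv e _ _ (fun k => rfl)
end

section
/- For every prime power q, every finite subset E ⊆ F_q, every α ∈ (F_q^*)^E, every subset Z ⊆ F_q \ E, and every integer m with |Z| ≤ m ≤ |E|, there exists β ∈ (F_q^*)^E such that ev_{E,α}(F_q[X]^{<m}_Z) = ev_{E,β}(F_q[X]^{<m−|Z|}). -/
open scoped BigOperators

/-- The evaluation map `ev_{E,α}` sending a polynomial `f` to the vector `(α e * f e)_{e ∈ E}`. -/
noncomputable def evalLM (F : Type) [Field F] (E : Finset F) (α : F → F) :
    Polynomial F →ₗ[F] (↥E → F) where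
  toFun f := fun e => α e * Polynomial.eval (e : F) f
  map_add' f g := by funext e; simp [mul_add]
  map_smul' c f := by funext e; simp; ring

/-- The subspace of polynomials vanishing at every point of `Z`. -/
def polyVanish (F : Type) [Field F] (Z : Finset F) : Submodule F (Polynomial F) where
  carrier := {p | ∀ z ∈ Z, Polynomial.eval z p = 0}
  add_mem' := by intro p q hp hq z hz; simp [hp z hz, hq z hz]
  zero_mem' := by intro z hz; simp
  smul_mem' := by intro c p hp z hz; simp [hp z hz]

open Polynomial in
lemma prodXsubC_dvd {F : Type} [Field F] (Z : Finset F) (p : Polynomial F)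
    (h : ∀ z ∈ Z, p.eval z = 0) : (∏ z ∈ Z, (X - C z)) ∣ p := by
  classical
  induction Z using Finset.induction_on generalizing p with
  | empty => simpa using dvd_refl p
  | @insert a Z' ha ih =>
    rw [Finset.prod_insert ha]
    have h1 : (X - C a) ∣ p := dvd_iff_isRoot.mpr (h a (Finset.mem_insert_self a Z'))
    obtain ⟨q, hq⟩ := h1
    have hq' : ∀ z ∈ Z', q.eval z = 0 := by
      intro z hz
      have hzne : z ≠ a := by rintro rfl; exact ha hz
      have h2 := h z (Finset.mem_insert_of_mem hz)
      rw [hq, eval_mul, eval_sub, eval_X, eval_C] at h2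
      rcases mul_eq_zero.mp h2 with h' | h'
      · exact absurd (sub_eq_zero.mp h') hzne
      · exact h'
    obtain ⟨r, hr⟩ := ih q hq'
    exact ⟨r, by rw [hq, hr]; ring⟩

/-- For a finite field `F`, a finite set `E ⊆ F`, nonzero coefficients `α`
on `E`, a set `Z ⊆ F \ E`, and `|Z| ≤ m ≤ |E|`, there exist nonzero coefficients `β` on `E`
such that `ev_{E,α}(F[X]^{<m}_Z) = ev_{E,β}(F[X]^{<m-|Z|})`. -/
theorem stmt5 (F : Type) [Field F] [Fintype F]
    (E : Finset F) (α : F → F) (hα : ∀ e ∈ E, α e ≠ 0)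
    (Z : Finset F) (hZE : ∀ z ∈ Z, z ∉ E)
    (m : ℕ) (hZm : Z.card ≤ m) (hmE : m ≤ E.card) :
    ∃ β : F → F, (∀ e ∈ E, β e ≠ 0) ∧
      (Polynomial.degreeLT F m ⊓ polyVanish F Z).map (evalLM F E α) =
        (Polynomial.degreeLT F (m - Z.card)).map (evalLM F E β) := by
  classical
  open Polynomial in
  set P : Polynomial F := ∏ z ∈ Z, (X - C z) with hP
  have hPmonic : P.Monic := monic_prod_of_monic _ _ (fun z _ => monic_X_sub_C z)
  have hPne : P ≠ 0 := hPmonic.ne_zero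
  have hPdeg : P.natDegree = Z.card := by
    rw [hP, natDegree_prod _ _ (fun z _ => X_sub_C_ne_zero z)]
    simp
  have hPe : ∀ e ∈ E, P.eval e ≠ 0 := by
    intro e he
    rw [hP, eval_prod]
    refine Finset.prod_ne_zero_iff.mpr fun z hz => ?_
    simp only [eval_sub, eval_X, eval_C, sub_ne_zero]
    rintro rfl; exact hZE e hz he
  have hPz : ∀ z ∈ Z, P.eval z = 0 := by
    intro z hz
    rw [hP, eval_prod]
    exact Finset.prod_eq_zero hz (by simp)
  refine ⟨fun e => α e * P.eval e, fun e he => mul_ne_zero (hα e he) (hPe e he), ?_⟩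
  ext v
  simp only [Submodule.mem_map, Submodule.mem_inf]
  constructor
  · rintro ⟨f, ⟨hfd, hfv⟩, rfl⟩
    obtain ⟨g, hg⟩ := prodXsubC_dvd Z f hfv
    refine ⟨g, ?_, ?_⟩
    · rcases eq_or_ne g 0 with rfl | hg0
      · exact Submodule.zero_mem _
      · rw [Polynomial.mem_degreeLT]
        have hf0 : f ≠ 0 := by rw [hg]; exact mul_ne_zero hPne hg0
        have : f.natDegree < m := by
          have := Polynomial.mem_degreeLT.mp hfd
          rwa [Polynomial.degree_eq_natDegree hf0, Nat.cast_lt] at this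
        have hnd : f.natDegree = Z.card + g.natDegree := by
          rw [hg, Polynomial.natDegree_mul hPne hg0, hPdeg]
        rw [Polynomial.degree_eq_natDegree hg0, Nat.cast_lt]
        omega
    · funext e
      show (α (e:F) * P.eval (e:F)) * g.eval (e:F) = α (e:F) * f.eval (e:F)
      rw [hg, eval_mul]; ring
  · rintro ⟨g, hgd, rfl⟩
    refine ⟨P * g, ⟨?_, ?_⟩, ?_⟩
    · rcases eq_or_ne g 0 with rfl | hg0
      · rw [mul_zero]; exact Submodule.zero_mem _
      · rw [Polynomial.mem_degreeLT]
        have hgn : g.natDegree < m - Z.card := by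
          have := Polynomial.mem_degreeLT.mp hgd
          rwa [Polynomial.degree_eq_natDegree hg0, Nat.cast_lt] at this
        rw [Polynomial.degree_eq_natDegree (mul_ne_zero hPne hg0), Nat.cast_lt,
          Polynomial.natDegree_mul hPne hg0, hPdeg]
        omega
    · intro z hz
      rw [eval_mul, hPz z hz, zero_mul]
    · funext e
      show α (e:F) * (P * g).eval (e:F) = (α (e:F) * P.eval (e:F)) * g.eval (e:F)
      rw [eval_mul]; ring
end

section
/- Let A and B be finite based cochain complexes over F_q and let C = A ⊗ B be their tensor product. Then for every integer i, d^i(C) ≥ min over j ∈ ℤ of max{d^j(A), d^{i−j}(B)}, where d^j is taken to be +∞ whenever Z^j \ B^j is empty. -/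
open scoped BigOperators

/-- A (pre-)cochain complex over `F` with a chosen basis at each level: level `i` has
basis set `basis i`, cochain space `basis i → F`, and coboundary map `d i`.  The cochain
condition `d (i+1) ∘ d i = 0` is imposed separately as a hypothesis. -/
structure PreBCC (F : Type) [Field F] : Type 1 where
  basis : ℤ → Type
  d : ∀ i : ℤ, (basis i → F) →ₗ[F] (basis (i + 1) → F)

namespace PreBCC

variable {F : Type} [Field F]

/-- The set of `i`-cocycles. -/
def cocycles (C : PreBCC F) (i : ℤ) : Set (C.basis i → F) := {f | C.d i f = 0}

/-- The set of `i`-coboundaries. -/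
def cobounds (C : PreBCC F) (i : ℤ) : Set (C.basis i → F) :=
  {f | ∃ g : C.basis (i - 1) → F, ∀ x : C.basis i,
      f x = C.d (i - 1) g (cast (congrArg C.basis (show i = i - 1 + 1 by omega)) x)}

/-- The Hamming weight (in `ℕ∞`) of a cochain: the number of nonzero coordinates. -/
noncomputable def wt {α : Type} (f : α → F) : ℕ∞ := Set.encard {x | f x ≠ 0}

/-- The `i`-cosystolic distance: the minimum Hamming weight of an element of
`Z^i \ B^i`, equal to `⊤` when this set is empty. -/
noncomputable def dcosys (C : PreBCC F) (i : ℤ) : ℕ∞ :=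
  sInf (wt '' (C.cocycles i \ C.cobounds i))

/-- The tensor product of two based (pre-)cochain complexes: level `i` has basis
`⊔_j A(j) × B(i-j)`, and the coboundary is `⊕_j (δ^A_j ⊗ I + (-1)^j I ⊗ δ^B_{i-j})`. -/
noncomputable def tensor (A B : PreBCC F) : PreBCC F where
  basis i := Σ j : ℤ, A.basis j × B.basis (i - j)
  d i := LinearMap.pi fun x : Σ j : ℤ, A.basis j × B.basis (i + 1 - j) =>
    (LinearMap.proj (cast (congrArg A.basis (show x.1 = x.1 - 1 + 1 by omega)) x.2.1)).comp
        ((A.d (x.1 - 1)).comp (LinearMap.funLeft F F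
          (fun a' : A.basis (x.1 - 1) =>
            (⟨x.1 - 1, a',
              cast (congrArg B.basis (show i + 1 - x.1 = i - (x.1 - 1) by omega)) x.2.2⟩ :
              Σ j : ℤ, A.basis j × B.basis (i - j)))))
      + ((-1 : F) ^ x.1) •
        ((LinearMap.proj
            (cast (congrArg B.basis (show i + 1 - x.1 = i - x.1 + 1 by omega)) x.2.2)).comp
          ((B.d (i - x.1)).comp (LinearMap.funLeft F F
            (fun b' : B.basis (i - x.1) =>
              (⟨x.1, x.2.1, b'⟩ : Σ j : ℤ, A.basis j × B.basis (i - j))))))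

end PreBCC

/-!
Over a field, choose for each coboundary map `d` a linear `σ` with `d σ d = d` and set
`π = 1 - dσ - σd`. Then `π` kills coboundaries, takes values in cocycles (as `d² = 0` on `A`), and
`σ ⊗ 1` is a homotopy on `A ⊗ B` between a cocycle `f` and `(π ⊗ 1) f`.

If in every bidegree `(j, i - j)` all rows `b ↦ (π ⊗ 1) f (x, b)` are coboundaries `d c_x` of `B`,
then `(π ⊗ 1) f = (q ⊗ d) c` for a projection `q` onto the cocycles of `A`, so `f` is a coboundary.
The rows of bidegree `(j, i - j)` are coboundaries as soon as every contraction
`a ↦ φ (f (a, ·))` with `φ` vanishing on `B^{i-j}(B)` is a coboundary of `A` (double annihilator),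
and also as soon as every contraction `b ↦ ψ (f (·, b))` with `ψ` vanishing on `B^j(A)` is a
coboundary of `B` (take `ψ = ev_x ∘ π`). Hence a noncoboundary cocycle `f` has, in some bidegree,
contractions of both kinds that are cocycles but not coboundaries; each has weight at most `wt f`.
-/

namespace LinearMap

theorem exists_comp_comp_eq_self {K V W : Type*} [Field K] [AddCommGroup V] [Module K V]
    [AddCommGroup W] [Module K W] (f : V →ₗ[K] W) : ∃ g : W →ₗ[K] V, f ∘ₗ g ∘ₗ f = f := by
  obtain ⟨s, hs⟩ := f.rangeRestrict.exists_rightInverse_of_surjective f.range_rangeRestrict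
  obtain ⟨g, hg⟩ := LinearMap.exists_extend s
  refine ⟨g, LinearMap.ext fun v => ?_⟩
  have hgv : g (f v) = s (f.rangeRestrict v) := LinearMap.congr_fun hg (f.rangeRestrict v)
  simpa [hgv] using congrArg Subtype.val (LinearMap.congr_fun hs (f.rangeRestrict v))

theorem dual_apply_comm {R X Y : Type*} [CommSemiring R] [Finite X]
    (φ : (X → R) →ₗ[R] R) (ψ : (Y → R) →ₗ[R] R) (M : X → Y → R) :
    φ (fun x => ψ (M x)) = ψ (fun y => φ (fun x => M x y)) := by
  classical
  have := Fintype.ofFinite X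
  have hM : (fun y => φ (fun x => M x y)) =
      ∑ x, φ (fun x' => if x = x' then 1 else 0) • M x := by
    ext y
    simp [φ.pi_apply_eq_sum_univ (fun x => M x y), mul_comm]
  rw [hM, map_sum, φ.pi_apply_eq_sum_univ]
  simp [mul_comm]

end LinearMap

theorem Submodule.exists_isProj {K V : Type*} [Field K] [AddCommGroup V] [Module K V]
    (p : Submodule K V) : ∃ q : V →ₗ[K] V, LinearMap.IsProj p q := by
  obtain ⟨r, hr⟩ := p.subtype.exists_leftInverse_of_injective p.ker_subtype
  exact ⟨p.subtype ∘ₗ r,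
    ⟨fun x => (r x).2, fun x hx => congrArg Subtype.val (LinearMap.congr_fun hr ⟨x, hx⟩)⟩⟩

theorem neg_one_zpow_mul_self {K : Type*} [Field K] (j : ℤ) :
    (-1 : K) ^ j * (-1 : K) ^ j = 1 := by
  rw [← mul_zpow, neg_one_mul, neg_neg, one_zpow]

namespace PreBCC

variable {F : Type} [Field F]

theorem wt_le_of_injective {α γ β : Type} {g : α → F} {f : β → F} (ι : α × γ → β)
    (hι : ι.Injective) (h : ∀ a, g a ≠ 0 → ∃ c, f (ι (a, c)) ≠ 0) : wt g ≤ wt f := by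
  calc wt g ≤ (Prod.fst '' {p | f (ι p) ≠ 0}).encard :=
        Set.encard_le_encard fun a ha => by
          obtain ⟨c, hc⟩ := h a ha
          exact ⟨(a, c), hc, rfl⟩
    _ ≤ {p | f (ι p) ≠ 0}.encard := Set.encard_image_le _ _
    _ = (ι '' {p | f (ι p) ≠ 0}).encard := (hι.encard_image _).symm
    _ ≤ wt f := Set.encard_le_encard (Set.image_subset_iff.2 fun _ hp => hp)

section Complex

variable (C : PreBCC F)

def reindex {m n : ℤ} (h : m = n) : (C.basis m → F) →ₗ[F] (C.basis n → F) :=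
  LinearMap.funLeft F F (cast (congrArg C.basis h.symm))

def dInto (n : ℤ) : (C.basis (n - 1) → F) →ₗ[F] (C.basis n → F) :=
  C.reindex (by omega : n - 1 + 1 = n) ∘ₗ C.d (n - 1)

def coboundaries (n : ℤ) : Submodule F (C.basis n → F) := LinearMap.range (C.dInto n)

noncomputable def dInv (n : ℤ) : (C.basis (n + 1) → F) →ₗ[F] (C.basis n → F) :=
  (C.d n).exists_comp_comp_eq_self.choose

noncomputable def harmonic (n : ℤ) : (C.basis n → F) →ₗ[F] (C.basis n → F) :=
  LinearMap.id - C.dInto n ∘ₗ C.dInv (n - 1) ∘ₗ C.reindex (by omega : n = n - 1 + 1)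
    - C.dInv n ∘ₗ C.d n

variable {C}

@[simp]
theorem reindex_apply {m n : ℤ} (h : m = n) (u : C.basis m → F) (x : C.basis n) :
    C.reindex h u x = u (cast (congrArg C.basis h.symm) x) := rfl

theorem mem_cobounds_iff {n : ℤ} {f : C.basis n → F} :
    f ∈ C.cobounds n ↔ f ∈ C.coboundaries n :=
  ⟨fun ⟨g, hg⟩ => ⟨g, (funext hg).symm⟩, fun ⟨g, hg⟩ => ⟨g, fun x => (congrFun hg x).symm⟩⟩

theorem dcosys_le_wt {n : ℤ} {f : C.basis n → F} (hf : C.d n f = 0)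
    (hf' : f ∉ C.coboundaries n) : C.dcosys n ≤ wt f :=
  sInf_le ⟨f, ⟨hf, fun h => hf' (mem_cobounds_iff.1 h)⟩, rfl⟩

theorem d_apply_of_eq {m m' : ℤ} (h : m = m') (u : C.basis m → F) (y : C.basis (m + 1)) :
    C.d m u y = C.d m' (fun x => u (cast (congrArg C.basis h.symm) x))
      (cast (congrArg C.basis (congrArg (· + 1) h)) y) := by
  subst h; rfl

theorem d_dInv_d (n : ℤ) (v : C.basis n → F) : C.d n (C.dInv n (C.d n v)) = C.d n v :=
  LinearMap.congr_fun (C.d n).exists_comp_comp_eq_self.choose_spec v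

theorem eq_dInto_add_dInv_add_harmonic (n : ℤ) (v : C.basis n → F) :
    v = C.dInto n (C.dInv (n - 1) (C.reindex (by omega) v)) + C.dInv n (C.d n v)
      + C.harmonic n v := by
  simp only [harmonic, LinearMap.sub_apply, LinearMap.id_apply, LinearMap.comp_apply]
  abel

variable (hdd : ∀ (n : ℤ) (f : C.basis n → F), C.d (n + 1) (C.d n f) = 0)
include hdd

theorem d_dInto (n : ℤ) (g : C.basis (n - 1) → F) : C.d n (C.dInto n g) = 0 := by
  ext y
  rw [d_apply_of_eq (show n = n - 1 + 1 by omega)]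
  simp [dInto, hdd]

theorem harmonic_dInto (n : ℤ) (g : C.basis (n - 1) → F) : C.harmonic n (C.dInto n g) = 0 := by
  have hg : C.reindex (by omega : n = n - 1 + 1) (C.dInto n g) = C.d (n - 1) g := by
    ext; simp [dInto]
  have hdg : C.dInto n (C.dInv (n - 1) (C.d (n - 1) g)) = C.dInto n g := by
    simp only [dInto, LinearMap.comp_apply, d_dInv_d]
  simp [harmonic, hg, hdg, d_dInto hdd]

theorem harmonic_eq_zero_of_mem {n : ℤ} {v : C.basis n → F} (hv : v ∈ C.coboundaries n) :
    C.harmonic n v = 0 := by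
  obtain ⟨g, rfl⟩ := hv
  exact harmonic_dInto hdd n g

theorem d_harmonic (n : ℤ) (v : C.basis n → F) : C.d n (C.harmonic n v) = 0 := by
  simp [harmonic, d_dInto hdd, d_dInv_d]

end Complex

section Tensor

variable {A B : PreBCC F}

theorem tensor_d_apply (n : ℤ) (f : (A.tensor B).basis n → F) (j : ℤ) (a : A.basis j)
    (b : B.basis (n + 1 - j)) :
    (A.tensor B).d n f ⟨j, a, b⟩ =
      A.dInto j (fun a' => f ⟨j - 1, a', cast (congrArg B.basis (by omega)) b⟩) a
      + (-1 : F) ^ j * B.d (n - j) (fun b' => f ⟨j, a, b'⟩)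
          (cast (congrArg B.basis (by omega)) b) := rfl

theorem tensor_d_apply_of_d_col_eq_zero {n : ℤ} {g : (A.tensor B).basis n → F}
    (hg : ∀ k (b : B.basis (n - k)), A.d k (fun a => g ⟨k, a, b⟩) = 0) (j : ℤ) (a : A.basis j)
    (b : B.basis (n + 1 - j)) :
    (A.tensor B).d n g ⟨j, a, b⟩ = (-1 : F) ^ j *
      B.d (n - j) (fun b' => g ⟨j, a, b'⟩) (cast (congrArg B.basis (by omega)) b) := by
  rw [tensor_d_apply]
  simp [dInto, hg]

theorem tensor_mk_congr {n j j' : ℤ} (h : j = j') {a : A.basis j} {a' : A.basis j'}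
    {b : B.basis (n - j)} {b' : B.basis (n - j')} (ha : HEq a a') (hb : HEq b b') :
    (⟨j, a, b⟩ : (A.tensor B).basis n) = ⟨j', a', b'⟩ := by
  subst h; rw [eq_of_heq ha, eq_of_heq hb]

theorem tensor_cast_mk {n n' : ℤ} (h : n = n') (j : ℤ) (a : A.basis j) (b : B.basis (n - j)) :
    cast (congrArg (A.tensor B).basis h) (⟨j, a, b⟩ : (A.tensor B).basis n) =
      ⟨j, a, cast (congrArg B.basis (by omega)) b⟩ := by
  subst h; rfl

variable {i : ℤ} {f : (A.tensor B).basis i → F}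

def rightContract (f : (A.tensor B).basis i → F) (j : ℤ)
    (φ : Module.Dual F (B.basis (i - j) → F)) : A.basis j → F :=
  fun a => φ (fun b => f ⟨j, a, b⟩)

def leftContract (f : (A.tensor B).basis i → F) (j : ℤ)
    (ψ : Module.Dual F (A.basis j → F)) : B.basis (i - j) → F :=
  fun b => ψ (fun a => f ⟨j, a, b⟩)

theorem wt_rightContract_le (j : ℤ) (φ : Module.Dual F (B.basis (i - j) → F)) :
    wt (rightContract f j φ) ≤ wt f := by
  refine wt_le_of_injective (fun p => (⟨j, p⟩ : (A.tensor B).basis i))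
    (sigma_mk_injective (β := fun k => A.basis k × B.basis (i - k))) fun a ha => ?_
  by_contra! h
  exact ha (by simp [rightContract, show (fun b => f ⟨j, a, b⟩) = 0 from funext h])

theorem wt_leftContract_le (j : ℤ) (ψ : Module.Dual F (A.basis j → F)) :
    wt (leftContract f j ψ) ≤ wt f := by
  refine wt_le_of_injective (fun p => (⟨j, p.swap⟩ : (A.tensor B).basis i))
    ((sigma_mk_injective (β := fun k => A.basis k × B.basis (i - k))).comp
      Prod.swap_injective) fun b hb => ?_
  by_contra! h
  exact hb (by simp [leftContract, show (fun a => f ⟨j, a, b⟩) = 0 from funext h])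

/-- The chain homotopy `dInv ⊗ 1`. -/
noncomputable def tensorHomotopy (f : (A.tensor B).basis i → F) :
    (A.tensor B).basis (i - 1) → F :=
  fun x => A.dInv x.1 (fun a => f ⟨x.1 + 1, a, cast (congrArg B.basis (by omega)) x.2.2⟩) x.2.1

/-- `(-1)^k (q_k ⊗ 1) c_k`; the sign cancels the sign of `1 ⊗ d` in the tensor coboundary. -/
def projCochain (q : ∀ k, (A.basis k → F) →ₗ[F] (A.basis k → F))
    (c : ∀ k, A.basis k → B.basis (i - k - 1) → F) : (A.tensor B).basis (i - 1) → F :=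
  fun x => (-1 : F) ^ x.1 *
    q x.1 (fun a => c x.1 a (cast (congrArg B.basis (by omega)) x.2.2)) x.2.1

theorem d_projCochain [∀ k, Finite (A.basis k)] {q : ∀ k, (A.basis k → F) →ₗ[F] (A.basis k → F)}
    (hq : ∀ k, LinearMap.IsProj (LinearMap.ker (A.d k)) (q k))
    (c : ∀ k, A.basis k → B.basis (i - k - 1) → F) (j : ℤ) (a : A.basis j) (b : B.basis (i - j)) :
    (A.tensor B).d (i - 1) (projCochain q c) ⟨j, a, cast (congrArg B.basis (by omega)) b⟩ =
      q j (fun x => B.dInto (i - j) (c j x) b) a := by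
  have hcol : ∀ k b, A.d k (fun a => projCochain q c ⟨k, a, b⟩) = 0 := fun k b => by
    change A.d k ((-1 : F) ^ k • q k (fun a => c k a (cast (congrArg B.basis (by omega)) b))) = 0
    rw [map_smul, (hq k).map_mem _, smul_zero]
  have hrow : (fun b' => projCochain q c ⟨j, a, b'⟩) = (-1 : F) ^ j •
      fun b' => q j (fun x => c j x (cast (congrArg B.basis (by omega)) b')) a := rfl
  have hdc : (fun x => B.dInto (i - j) (c j x) b) = fun x => B.d (i - 1 - j)
      (fun b' => c j x (cast (congrArg B.basis (by omega)) b'))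
      (cast (congrArg B.basis (by omega)) b) := by
    ext x
    rw [dInto, LinearMap.comp_apply, reindex_apply,
      d_apply_of_eq (show i - j - 1 = i - 1 - j by omega)]
    simp only [cast_cast]
  have hcomm := LinearMap.dual_apply_comm (LinearMap.proj a ∘ₗ q j)
    (LinearMap.proj (cast (congrArg B.basis (by omega)) b) ∘ₗ B.d (i - 1 - j))
    fun x b' => c j x (cast (congrArg B.basis (by omega)) b')
  simp only [LinearMap.comp_apply, LinearMap.proj_apply] at hcomm
  rw [tensor_d_apply_of_d_col_eq_zero hcol]
  simp only [cast_cast]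
  rw [hrow, map_smul, Pi.smul_apply, smul_eq_mul, ← mul_assoc, neg_one_zpow_mul_self, one_mul,
    hdc, hcomm]

section Cocycle

variable (hf : (A.tensor B).d i f = 0)
include hf

/-- `m` is a parameter so that both `m = i - j - 1` and `m = i - 1 - j` (not definitionally
equal) can be used. -/
theorem d_col_of_cocycle (j : ℤ) {m : ℤ} (hm : i - j = m + 1)
    (a : A.basis (j + 1)) (b : B.basis (i - j)) :
    A.d j (fun a' => f ⟨j, a', b⟩) a = (-1 : F) ^ j *
      B.d m (fun b' => f ⟨j + 1, a, cast (congrArg B.basis (by omega)) b'⟩)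
        (cast (congrArg B.basis hm) b) := by
  obtain rfl : m = i - (j + 1) := by omega
  have h0 : (A.tensor B).d i f ⟨j + 1, a, cast (congrArg B.basis (by omega)) b⟩ = 0 := by
    rw [hf]; rfl
  rw [tensor_d_apply, dInto, LinearMap.comp_apply, reindex_apply,
    d_apply_of_eq (show j + 1 - 1 = j by omega)] at h0
  have hcol : (fun x => f ⟨j + 1 - 1, cast (congrArg A.basis (by omega)) x,
      cast (congrArg B.basis (by omega)) b⟩) = fun a' => f ⟨j, a', b⟩ :=
    funext fun x => congrArg f (tensor_mk_congr (by omega) (cast_heq _ _) (cast_heq _ _))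
  simp only [cast_cast, cast_eq] at h0
  rw [hcol, zpow_add_one₀ (by norm_num : (-1 : F) ≠ 0)] at h0
  simp only [cast_eq]
  linear_combination h0

theorem d_row_of_cocycle (j : ℤ) (a : A.basis j) (y : B.basis (i - j + 1)) :
    (-1 : F) ^ j * B.d (i - j) (fun b => f ⟨j, a, b⟩) y =
      -A.dInto j (fun a' => f ⟨j - 1, a', cast (congrArg B.basis (by omega)) y⟩) a := by
  have h0 : (A.tensor B).d i f ⟨j, a, cast (congrArg B.basis (by omega)) y⟩ = 0 := by
    rw [hf]; rfl
  rw [tensor_d_apply] at h0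
  simp only [cast_cast, cast_eq] at h0
  linear_combination h0

theorem d_rightContract [∀ k, Finite (A.basis k)] (j : ℤ)
    {φ : Module.Dual F (B.basis (i - j) → F)}
    (hφ : φ ∈ (B.coboundaries (i - j)).dualAnnihilator) :
    A.d j (rightContract f j φ) = 0 := by
  ext a
  have hcol : (fun b => A.d j (fun a' => f ⟨j, a', b⟩) a) = (-1 : F) ^ j •
      B.dInto (i - j) (fun b' => f ⟨j + 1, a, cast (congrArg B.basis (by omega)) b'⟩) := by
    ext b
    exact d_col_of_cocycle hf j (by omega) a b
  have hcomm := LinearMap.dual_apply_comm (LinearMap.proj a ∘ₗ A.d j) φ fun a' b => f ⟨j, a', b⟩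
  simp only [LinearMap.comp_apply, LinearMap.proj_apply] at hcomm
  change A.d j (fun a' => φ (fun b => f ⟨j, a', b⟩)) a = 0
  rw [hcomm, hcol, map_smul,
    (Submodule.mem_dualAnnihilator φ).1 hφ _ (LinearMap.mem_range_self _ _), smul_zero]

theorem d_leftContract [∀ k, Finite (B.basis k)] (j : ℤ)
    {ψ : Module.Dual F (A.basis j → F)} (hψ : ψ ∈ (A.coboundaries j).dualAnnihilator) :
    B.d (i - j) (leftContract f j ψ) = 0 := by
  ext y
  have hrow : (fun a => B.d (i - j) (fun b => f ⟨j, a, b⟩) y) = -(-1 : F) ^ j •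
      A.dInto j (fun a' => f ⟨j - 1, a', cast (congrArg B.basis (by omega)) y⟩) := by
    ext a
    simp only [Pi.smul_apply, smul_eq_mul]
    linear_combination (-1 : F) ^ j * d_row_of_cocycle hf j a y -
      B.d (i - j) (fun b => f ⟨j, a, b⟩) y * neg_one_zpow_mul_self (K := F) j
  have hcomm := LinearMap.dual_apply_comm (LinearMap.proj y ∘ₗ B.d (i - j)) ψ
    fun b a => f ⟨j, a, b⟩
  simp only [LinearMap.comp_apply, LinearMap.proj_apply] at hcomm
  change B.d (i - j) (fun b => ψ (fun a => f ⟨j, a, b⟩)) y = 0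
  rw [hcomm, hrow, map_smul,
    (Submodule.mem_dualAnnihilator ψ).1 hψ _ (LinearMap.mem_range_self _ _), smul_zero]

theorem eq_d_tensorHomotopy_add_harmonic [∀ k, Finite (A.basis k)] (j : ℤ) (a : A.basis j)
    (b : B.basis (i - j)) :
    f ⟨j, a, b⟩ = (A.tensor B).d (i - 1) (tensorHomotopy f)
        ⟨j, a, cast (congrArg B.basis (by omega)) b⟩
      + A.harmonic j (fun a' => f ⟨j, a', b⟩) a := by
  let col : A.basis j → F := fun a' => f ⟨j, a', b⟩
  have hA : (fun a' => tensorHomotopy f ⟨j - 1, a', cast (congrArg B.basis (by omega)) b⟩) =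
      A.dInv (j - 1) (A.reindex (by omega) col) := by
    ext a'
    refine congrArg (fun u => A.dInv (j - 1) u a') (funext fun a'' => ?_)
    dsimp only [reindex_apply, col]
    exact congrArg f (tensor_mk_congr (by omega) (cast_heq _ _).symm
      ((cast_heq _ _).trans (cast_heq _ _)))
  have hB : (-1 : F) ^ j * B.d (i - 1 - j) (fun b' => tensorHomotopy f ⟨j, a, b'⟩)
      (cast (congrArg B.basis (by omega)) b) = A.dInv j (A.d j col) a := by
    have hcol : A.d j col = (-1 : F) ^ j • fun a'' => B.d (i - 1 - j)
        (fun b' => f ⟨j + 1, a'', cast (congrArg B.basis (by omega)) b'⟩)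
        (cast (congrArg B.basis (by omega)) b) := by
      ext a''
      exact d_col_of_cocycle hf j (by omega) a'' b
    have hcomm := LinearMap.dual_apply_comm (LinearMap.proj a ∘ₗ A.dInv j)
      (LinearMap.proj (cast (congrArg B.basis (by omega)) b) ∘ₗ B.d (i - 1 - j))
      fun a'' b' => f ⟨j + 1, a'', cast (congrArg B.basis (by omega)) b'⟩
    simp only [LinearMap.comp_apply, LinearMap.proj_apply] at hcomm
    rw [hcol, map_smul, Pi.smul_apply, smul_eq_mul, hcomm]
    rfl
  calc f ⟨j, a, b⟩ = col a := rfl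
    _ = _ := congrFun (eq_dInto_add_dInv_add_harmonic j col) a
    _ = _ := by
      rw [tensor_d_apply]
      simp only [cast_cast]
      rw [hA, hB]
      rfl

end Cocycle

section Kunneth

variable [∀ k, Finite (A.basis k)]
  (hddA : ∀ (n : ℤ) (v : A.basis n → F), A.d (n + 1) (A.d n v) = 0)
include hddA

theorem mem_coboundaries_of_harmonic_rows (hf : (A.tensor B).d i f = 0)
    (hrow : ∀ j (x : A.basis j),
      (fun b => A.harmonic j (fun a => f ⟨j, a, b⟩) x) ∈ B.coboundaries (i - j)) :
    f ∈ (A.tensor B).coboundaries i := by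
  choose c hc using hrow
  choose q hq using fun k => (LinearMap.ker (A.d k)).exists_isProj
  refine ⟨tensorHomotopy f + projCochain q c, funext fun ⟨j, a, b⟩ => ?_⟩
  have hE : (A.tensor B).d (i - 1) (projCochain q c) ⟨j, a, cast (congrArg B.basis (by omega)) b⟩
      = A.harmonic j (fun a' => f ⟨j, a', b⟩) a := by
    rw [d_projCochain hq, funext fun x => congrFun (hc j x) b,
      (hq j).map_id _ (LinearMap.mem_ker.2 (d_harmonic hddA j _))]
  change (A.tensor B).d (i - 1) (tensorHomotopy f + projCochain q c)
    (cast (congrArg (A.tensor B).basis (by omega)) ⟨j, a, b⟩) = f ⟨j, a, b⟩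
  rw [tensor_cast_mk (show i = i - 1 + 1 by omega), map_add]
  exact (congrArg₂ (· + ·) rfl hE).trans (eq_d_tensorHomotopy_add_harmonic hf j a b).symm

omit [∀ k, Finite (A.basis k)] in
theorem harmonic_row_mem_of_leftContract (j : ℤ)
    (h : ∀ ψ ∈ (A.coboundaries j).dualAnnihilator, leftContract f j ψ ∈ B.coboundaries (i - j))
    (x : A.basis j) :
    (fun b => A.harmonic j (fun a => f ⟨j, a, b⟩) x) ∈ B.coboundaries (i - j) :=
  h (LinearMap.proj (φ := fun _ => F) x ∘ₗ A.harmonic j)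
    ((Submodule.mem_dualAnnihilator _).2 fun _ hv => by simp [harmonic_eq_zero_of_mem hddA hv])

theorem harmonic_row_mem_of_rightContract (j : ℤ)
    (h : ∀ φ ∈ (B.coboundaries (i - j)).dualAnnihilator, rightContract f j φ ∈ A.coboundaries j)
    (x : A.basis j) :
    (fun b => A.harmonic j (fun a => f ⟨j, a, b⟩) x) ∈ B.coboundaries (i - j) := by
  rw [← Subspace.forall_mem_dualAnnihilator_apply_eq_zero_iff]
  intro φ hφ
  have hcomm := LinearMap.dual_apply_comm (LinearMap.proj x ∘ₗ A.harmonic j) φ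
    fun a b => f ⟨j, a, b⟩
  simp only [LinearMap.comp_apply, LinearMap.proj_apply] at hcomm
  rw [← hcomm]
  exact congrFun (harmonic_eq_zero_of_mem hddA (h φ hφ)) x

theorem exists_nontrivial_contractions (hf : (A.tensor B).d i f = 0)
    (hf' : f ∉ (A.tensor B).coboundaries i) :
    ∃ j, (∃ φ ∈ (B.coboundaries (i - j)).dualAnnihilator,
        rightContract f j φ ∉ A.coboundaries j) ∧
      ∃ ψ ∈ (A.coboundaries j).dualAnnihilator, leftContract f j ψ ∉ B.coboundaries (i - j) := by
  by_contra! h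
  refine hf' (mem_coboundaries_of_harmonic_rows hddA hf fun j x => ?_)
  by_cases hφ : ∃ φ ∈ (B.coboundaries (i - j)).dualAnnihilator,
      rightContract f j φ ∉ A.coboundaries j
  · exact harmonic_row_mem_of_leftContract hddA j (h j hφ) x
  · push Not at hφ
    exact harmonic_row_mem_of_rightContract hddA j hφ x

end Kunneth

end Tensor

end PreBCC

theorem stmt7_general (F : Type) [Field F] (A B : PreBCC F)
    (hddA : ∀ (i : ℤ) (f : A.basis i → F), A.d (i + 1) (A.d i f) = 0)
    (hAfin : ∀ i, Finite (A.basis i)) (hBfin : ∀ i, Finite (B.basis i))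
    (i : ℤ) :
    ⨅ j : ℤ, max (A.dcosys j) (B.dcosys (i - j)) ≤ (A.tensor B).dcosys i := by
  refine le_sInf ?_
  rintro _ ⟨f, ⟨hf, hfB⟩, rfl⟩
  obtain ⟨j, ⟨φ, hφ, hφA⟩, ψ, hψ, hψB⟩ :=
    PreBCC.exists_nontrivial_contractions hddA hf (mt PreBCC.mem_cobounds_iff.2 hfB)
  exact iInf_le_of_le j <| max_le
    ((PreBCC.dcosys_le_wt (PreBCC.d_rightContract hf j hφ) hφA).trans
      (PreBCC.wt_rightContract_le j φ))
    ((PreBCC.dcosys_le_wt (PreBCC.d_leftContract hf j hψ) hψB).trans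
      (PreBCC.wt_leftContract_le j ψ))

/-- cosystolic distance of tensor products; Lemma 3.25.  Let `A` and `B`
be finite based cochain complexes over a finite field `F` (each level is a finite set, only
finitely many levels are nonempty, and the coboundary maps square to zero).  Then for every
`i`, the `i`-cosystolic distance of the tensor product `C = A ⊗ B` satisfies
`d^i(C) ≥ min_{j ∈ ℤ} max {d^j(A), d^{i-j}(B)}`, where the distances take the value `⊤`
when the corresponding set `Z \ B` is empty. -/
theorem stmt7 (F : Type) [Field F] [Fintype F] (A B : PreBCC F)
    (hddA : ∀ (i : ℤ) (f : A.basis i → F), A.d (i + 1) (A.d i f) = 0)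
    (hddB : ∀ (i : ℤ) (f : B.basis i → F), B.d (i + 1) (B.d i f) = 0)
    (hAfin : ∀ i, Finite (A.basis i)) (hBfin : ∀ i, Finite (B.basis i))
    (hAsupp : {i : ℤ | Nonempty (A.basis i)}.Finite)
    (hBsupp : {i : ℤ | Nonempty (B.basis i)}.Finite)
    (i : ℤ) :
    ⨅ j : ℤ, max (A.dcosys j) (B.dcosys (i - j)) ≤ (A.tensor B).dcosys i :=
  stmt7_general F A B hddA hAfin hBfin i
end

section
/- Let q be a prime power, t ≥ 1 an integer, Γ = (V = V₀ ⊔ V₁, E, v₀, v₁) a bipartite undirected multigraph with edge set E ⊆ F_q in which every edge e joins v₀(e) ∈ V₀ to v₁(e) ∈ V₁, and L_V : V → F_q^t a vertex labeling; let Γ̄ = (V̄, Ē) be the associated lifted graph. Define L_lift : E → F_q^t by L_lift(e) = e·(L_V(v₀(e)) − L_V(v₁(e))), the scalar multiple of the label difference by the field element e ∈ F_q. Then Γ̄ is isomorphic to the F_q^t-lift Γ̃ of Γ with labeling L_lift: there exist bijections φ_V : V × F_q^t → V̄ and φ_E : E × F_q^t → Ē such that for every edge ẽ of Γ̃, φ_V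 maps the two endpoints of ẽ to the two endpoints of φ_E(ẽ) (respecting the fixed orientations). -/
open scoped BigOperators

/-- The vertex set of the lifted graph `Γ̄`: the disjoint union over `v ∈ V` of the set of
affine lines in `F^{t+1} = F × F^t` in direction `(1, L v)`, i.e. of the quotient of
`F × F^t` by the span of `(1, L v)`. -/
def LiftedVertex (F : Type) [Field F] (t : ℕ) {V : Type} (L : V → Fin t → F) : Type :=
  Σ v : V, ((F × (Fin t → F)) ⧸ Submodule.span F {((1 : F), L v)})

/-- The endpoint of the lifted edge `(e, x) ∈ Ē = E × F^t` lying on the affine line through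
the point `(e, x)` in direction `(1, L v)`, where `v` is a chosen endpoint of `e`. -/
def liftedEnd (F : Type) [Field F] (t : ℕ) {V : Type} (E : Finset F) (vb : ↥E → V)
    (L : V → Fin t → F) (p : ↥E × (Fin t → F)) : LiftedVertex F t L :=
  ⟨vb p.1, Submodule.Quotient.mk ((p.1 : F), p.2)⟩

/-- Let `Γ = (V₀ ⊔ V₁, E ⊆ F, v0, v1)` be a bipartite multigraph over a
finite field `F`, and `L : V → F^t` a vertex labeling.  Then the lifted graph `Γ̄` (with
vertices the affine lines `⊔_{v} F^{t+1}/span{(1, L v)}` and edges `E × F^t`, the edge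
`(e, x)` joining the lines through `(e, x)` in directions `(1, L (v0 e))` and
`(1, L (v1 e))`) is isomorphic to the `F^t`-lift of `Γ` with edge labeling
`L_lift e = e • (L (v0 e) − L (v1 e))`: there are bijections on vertices and edges carrying
the endpoints of each lifted edge `(e, g)` (namely `(v0 e, g)` and
`(v1 e, g + L_lift e)`) to the endpoints of the corresponding edge of `Γ̄`. -/
theorem stmt8 (F : Type) [Field F] [Fintype F] (t : ℕ) (ht : 1 ≤ t)
    {V : Type} [Fintype V] (V0 V1 : Set V)
    (hdisj : Disjoint V0 V1) (hcover : V0 ∪ V1 = Set.univ)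
    (E : Finset F) (v0 v1 : ↥E → V)
    (hb0 : ∀ e, v0 e ∈ V0) (hb1 : ∀ e, v1 e ∈ V1)
    (L : V → Fin t → F) :
    ∃ (φV : V × (Fin t → F) ≃ LiftedVertex F t L)
      (φE : (↥E × (Fin t → F)) ≃ (↥E × (Fin t → F))),
      ∀ p : ↥E × (Fin t → F),
        φV (v0 p.1, p.2) = liftedEnd F t E v0 L (φE p) ∧
        φV (v1 p.1, p.2 + (p.1 : F) • (L (v0 p.1) - L (v1 p.1))) =
          liftedEnd F t E v1 L (φE p) := by
  have key : ∀ v : V, Function.Bijective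
      (fun g : Fin t → F => (Submodule.Quotient.mk ((0:F), g) :
        (F × (Fin t → F)) ⧸ Submodule.span F {((1:F), L v)})) := by
    intro v
    constructor
    · intro g g' h
      rw [Submodule.Quotient.eq, Submodule.mem_span_singleton] at h
      obtain ⟨a, ha⟩ := h
      have h1 : a * 1 = (0:F) - 0 := congrArg Prod.fst ha
      have h2 : a • L v = g - g' := congrArg Prod.snd ha
      simp only [mul_one, sub_zero] at h1
      subst h1
      rw [zero_smul] at h2
      exact sub_eq_zero.mp h2.symm
    · intro x
      obtain ⟨⟨a, b⟩, rfl⟩ := Submodule.Quotient.mk_surjective _ x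
      refine ⟨b - a • L v, ?_⟩
      rw [Submodule.Quotient.eq, Submodule.mem_span_singleton]
      refine ⟨-a, ?_⟩
      ext <;> simp
  let eV : ∀ v : V, (Fin t → F) ≃
      ((F × (Fin t → F)) ⧸ Submodule.span F {((1:F), L v)}) :=
    fun v => Equiv.ofBijective _ (key v)
  refine ⟨(Equiv.sigmaEquivProd V (Fin t → F)).symm.trans
      (Equiv.sigmaCongrRight eV),
    ⟨fun p => (p.1, p.2 + (p.1 : F) • L (v0 p.1)),
     fun p => (p.1, p.2 - (p.1 : F) • L (v0 p.1)),
     fun p => by simp, fun p => by simp⟩, ?_⟩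
  intro ⟨e, g⟩
  constructor
  · show (⟨v0 e, eV (v0 e) g⟩ : LiftedVertex F t L) = ⟨v0 e, Submodule.Quotient.mk ((e:F), g + (e:F) • L (v0 e))⟩
    congr 1
    show Submodule.Quotient.mk ((0:F), g) = _
    rw [Submodule.Quotient.eq, Submodule.mem_span_singleton]
    refine ⟨-(e:F), ?_⟩
    ext <;> simp
  · show (⟨v1 e, eV (v1 e) (g + (e:F) • (L (v0 e) - L (v1 e)))⟩ : LiftedVertex F t L)
      = ⟨v1 e, Submodule.Quotient.mk ((e:F), g + (e:F) • L (v0 e))⟩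
    congr 1
    show Submodule.Quotient.mk ((0:F), g + (e:F) • (L (v0 e) - L (v1 e))) = _
    rw [Submodule.Quotient.eq, Submodule.mem_span_singleton]
    refine ⟨-(e:F), ?_⟩
    ext <;> simp [smul_sub] <;> ring
end

section
/- Let q be a prime power, t ≥ 1 an integer, Γ = (V, E, v₀, v₁) a finite undirected multigraph with E ⊆ F_q, χ a nontrivial character of the additive group F_q^t, D a β-biased probability distribution over (F_q^t)^V, and ((e₁,b₁),…,(e_{2k},b_{2k})) a closed walk of length 2k on Γ that is not redundant. For L_V ∈ (F_q^t)^V define L_lift : E → F_q^t by L_lift(e) = e·(L_V(v₀(e)) − L_V(v₁(e))). Then |E_{L_V∼D}[∏_{i=1}^{2k} χ((−1)^{b_i} L_lift(e_i))]| ≤ β. -/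
open scoped BigOperators

/-- The cyclic successor of `i : Fin n`. -/
def nextIdx {n : ℕ} (i : Fin n) : Fin n := ⟨((i : ℕ) + 1) % n, Nat.mod_lt _ i.pos⟩

/-- The cyclic predecessor of `i : Fin n`. -/
def prevIdx {n : ℕ} (i : Fin n) : Fin n := ⟨((i : ℕ) + (n - 1)) % n, Nat.mod_lt _ i.pos⟩

/-- The tail (starting vertex) of a directed edge: `(e, false)` goes from `v0 e` to `v1 e`
and `(e, true)` goes from `v1 e` to `v0 e`. -/
def dirTail {V E : Type} (v0 v1 : E → V) (p : E × Bool) : V := if p.2 then v1 p.1 else v0 p.1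

/-- The head (ending vertex) of a directed edge. -/
def dirHead {V E : Type} (v0 v1 : E → V) (p : E × Bool) : V := if p.2 then v0 p.1 else v1 p.1

/-- A closed walk: a cyclic sequence of directed edges in which the head of each directed
edge is the tail of the next one. -/
def IsClosedWalk {V E : Type} (v0 v1 : E → V) {n : ℕ} (w : Fin n → E × Bool) : Prop :=
  ∀ i : Fin n, dirHead v0 v1 (w i) = dirTail v0 v1 (w (nextIdx i))

/-- A closed walk is redundant if for every index `i`, either the vertex `v_i` (the tail of
the `i`-th directed edge) is visited at some other index, or the `(i-1)`-st and `i`-th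
edges coincide. -/
def IsRedundant {V E : Type} (v0 v1 : E → V) {n : ℕ} (w : Fin n → E × Bool) : Prop :=
  ∀ i : Fin n, (∃ j : Fin n, j ≠ i ∧ dirTail v0 v1 (w j) = dirTail v0 v1 (w i)) ∨
    (w (prevIdx i)).1 = (w i).1

lemma nextIdx_prevIdx {n : ℕ} (i : Fin n) : nextIdx (prevIdx i) = i := by
  have hn := i.pos
  apply Fin.ext
  simp only [nextIdx, prevIdx, Nat.mod_add_mod]
  have : (i : ℕ) + (n - 1) + 1 = (i : ℕ) + n := by omega
  rw [this, Nat.add_mod_right, Nat.mod_eq_of_lt i.isLt]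

lemma prevIdx_nextIdx {n : ℕ} (i : Fin n) : prevIdx (nextIdx i) = i := by
  have hn := i.pos
  apply Fin.ext
  simp only [nextIdx, prevIdx, Nat.mod_add_mod]
  have : (i : ℕ) + 1 + (n - 1) = (i : ℕ) + n := by omega
  rw [this, Nat.add_mod_right, Nat.mod_eq_of_lt i.isLt]

lemma nextIdx_eq_iff {n : ℕ} (i j : Fin n) : nextIdx j = i ↔ j = prevIdx i := by
  constructor
  · rintro rfl; exact (prevIdx_nextIdx j).symm
  · rintro rfl; exact nextIdx_prevIdx i

lemma prevIdx_ne_self {n : ℕ} (hn : 2 ≤ n) (i : Fin n) : prevIdx i ≠ i := by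
  intro h
  have h2 : nextIdx i = i := by conv_lhs => rw [← h, nextIdx_prevIdx]
  have h3 : ((i : ℕ) + 1) % n = i := congrArg Fin.val h2
  rcases eq_or_lt_of_le (Nat.succ_le_of_lt i.isLt) with h4 | h4
  · have h5 : (i : ℕ) + 1 = n := h4
    rw [h5, Nat.mod_self] at h3; omega
  · rw [Nat.mod_eq_of_lt h4] at h3; omega

lemma addChar_sum {A M : Type*} [AddCommMonoid A] [CommMonoid M] (χ : AddChar A M)
    {ι : Type*} (s : Finset ι) (f : ι → A) :
    χ (∑ i ∈ s, f i) = ∏ i ∈ s, χ (f i) := by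
  induction s using Finset.cons_induction with
  | empty => simp
  | cons a s ha ih => simp [Finset.sum_cons, Finset.prod_cons, AddChar.map_add_eq_mul, ih]

/-- non-redundant walks have small expected character product.  Let Γ be
a finite multigraph with edge set `E ⊆ F`, let `χ` be a nontrivial character of `F^t`, let
`D` be a `β`-biased distribution on `(F^t)^V`, and let `((e_i, b_i))_i` be a closed walk of
length `2k` that is not redundant.  With `L_lift e = e • (L (v0 e) − L (v1 e))`, we have
`‖E_{L∼D} ∏_i χ((−1)^{b_i} L_lift(e_i))‖ ≤ β`. -/
theorem stmt10 (F : Type) [Field F] [Fintype F] [DecidableEq F]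
    (t : ℕ) (ht : 1 ≤ t) {V : Type} [Fintype V] [DecidableEq V]
    (E : Finset F) (v0 v1 : ↥E → V) (hloop : ∀ e, v0 e ≠ v1 e)
    (χ : AddChar (Fin t → F) ℂ) (hχ : ∃ z, χ z ≠ 1)
    (β : ℝ) (D : (V → Fin t → F) → ℝ) (hD0 : ∀ L, 0 ≤ D L) (hD1 : ∑ L, D L = 1)
    (hbias : ∀ χ' : AddChar (V → Fin t → F) ℂ, (∃ z, χ' z ≠ 1) →
      ‖∑ L, (D L : ℂ) * χ' L‖ ≤ β)
    (k : ℕ) (hk : 1 ≤ k) (w : Fin (2 * k) → ↥E × Bool)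
    (hwalk : IsClosedWalk v0 v1 w) (hnr : ¬ IsRedundant v0 v1 w) :
    ‖∑ L : V → Fin t → F, (D L : ℂ) *
        ∏ i : Fin (2 * k),
          χ (if (w i).2 then -(((w i).1 : F) • (L (v0 (w i).1) - L (v1 (w i).1)))
             else ((w i).1 : F) • (L (v0 (w i).1) - L (v1 (w i).1)))‖ ≤ β := by
  classical
  let sg : Fin (2 * k) → F := fun i => if (w i).2 then -(((w i).1 : F)) else ((w i).1 : F)
  let f : (V → Fin t → F) →+ (Fin t → F) :=
  { toFun := fun L => ∑ i : Fin (2 * k), sg i • (L (v0 (w i).1) - L (v1 (w i).1))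
    map_zero' := by simp
    map_add' := by
      intro L M
      simp only [Pi.add_apply, add_sub_add_comm, smul_add]
      exact Finset.sum_add_distrib }
  have hprod : ∀ L : V → Fin t → F,
      (∏ i : Fin (2 * k),
        χ (if (w i).2 then -(((w i).1 : F) • (L (v0 (w i).1) - L (v1 (w i).1)))
           else ((w i).1 : F) • (L (v0 (w i).1) - L (v1 (w i).1)))) = χ (f L) := by
    intro L
    have : f L = ∑ i : Fin (2 * k), sg i • (L (v0 (w i).1) - L (v1 (w i).1)) := rfl
    rw [this, addChar_sum]
    refine Finset.prod_congr rfl fun i _ => ?_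
    by_cases hb : (w i).2 <;> simp [sg, hb, neg_smul]
  rw [IsRedundant] at hnr
  push_neg at hnr
  obtain ⟨i, h1, h2⟩ := hnr
  set v := dirTail v0 v1 (w i) with hv
  have htail : ∀ j, dirTail v0 v1 (w j) = v ↔ j = i := by
    intro j
    constructor
    · intro h; by_contra hji; exact h1 j hji h
    · rintro rfl; rfl
  have hhead : ∀ j : Fin (2 * k), dirHead v0 v1 (w j) = v ↔ j = prevIdx i := by
    intro j
    rw [hwalk j, htail, nextIdx_eq_iff]
  set c : F := ((w i).1 : F) - ((w (prevIdx i)).1 : F) with hc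
  have hcne : c ≠ 0 := by
    rw [hc, sub_ne_zero]
    intro h
    exact h2 (Subtype.ext h.symm)
  obtain ⟨z0, hz0⟩ := hχ
  set L0 : V → Fin t → F := fun u => if u = v then c⁻¹ • z0 else 0 with hL0
  have hterm : ∀ j : Fin (2 * k), sg j • (L0 (v0 (w j).1) - L0 (v1 (w j).1)) =
      ((if dirTail v0 v1 (w j) = v then ((w j).1 : F) else 0) -
       (if dirHead v0 v1 (w j) = v then ((w j).1 : F) else 0)) • (c⁻¹ • z0) := by
    intro j
    by_cases hb : (w j).2 <;>
      simp only [sg, L0, dirTail, dirHead, hb, if_true, if_false] <;>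
      split_ifs <;>
      simp [sub_smul, smul_sub, neg_smul, smul_smul]
  have hsum : (∑ j : Fin (2 * k),
      ((if dirTail v0 v1 (w j) = v then ((w j).1 : F) else 0) -
       (if dirHead v0 v1 (w j) = v then ((w j).1 : F) else 0))) = c := by
    rw [Finset.sum_sub_distrib]
    have e1 : (∑ j : Fin (2 * k), (if dirTail v0 v1 (w j) = v then ((w j).1 : F) else 0))
        = ((w i).1 : F) := by
      rw [Finset.sum_congr rfl fun j _ => by rw [show (if dirTail v0 v1 (w j) = v then ((w j).1 : F) else 0) = (if j = i then ((w j).1 : F) else 0) from by simp [htail j]]]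
      simp [Finset.sum_ite_eq']
    have e2 : (∑ j : Fin (2 * k), (if dirHead v0 v1 (w j) = v then ((w j).1 : F) else 0))
        = ((w (prevIdx i)).1 : F) := by
      rw [Finset.sum_congr rfl fun j _ => by rw [show (if dirHead v0 v1 (w j) = v then ((w j).1 : F) else 0) = (if j = prevIdx i then ((w j).1 : F) else 0) from by simp [hhead j]]]
      simp [Finset.sum_ite_eq']
    rw [e1, e2, hc]
  have hfL0 : f L0 = z0 := by
    have : f L0 = ∑ j : Fin (2 * k), sg j • (L0 (v0 (w j).1) - L0 (v1 (w j).1)) := rfl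
    rw [this, Finset.sum_congr rfl fun j _ => hterm j, ← Finset.sum_smul, hsum,
      smul_smul, mul_inv_cancel₀ hcne, one_smul]
  have hnt : ∃ z, (χ.compAddMonoidHom f) z ≠ 1 := ⟨L0, by simpa [hfL0] using hz0⟩
  have hgoal : (∑ L : V → Fin t → F, (D L : ℂ) *
      ∏ i : Fin (2 * k),
        χ (if (w i).2 then -(((w i).1 : F) • (L (v0 (w i).1) - L (v1 (w i).1)))
           else ((w i).1 : F) • (L (v0 (w i).1) - L (v1 (w i).1))))
      = ∑ L, (D L : ℂ) * (χ.compAddMonoidHom f) L :=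
    Finset.sum_congr rfl fun L _ => by rw [hprod L]; rfl
  rw [hgoal]
  exact hbias _ hnt
end

section
/- Let q be a prime power and m ≥ 2, r ≥ 2 integers. Let V_1,…,V_r be finite-dimensional F_{q^m}-vector spaces with subspaces B_h ⊆ Z_h ⊆ V_h and subspaces H'_h ⊆ Z_h/B_h, and let ζ : V_1 × ⋯ × V_r → F_{q^m} be an F_{q^m}-multilinear form that is coboundary-invariant on H' = (H'_h)_{h∈[r]}. Fix an F_q-linear map φ : F_{q^m} → F_q with φ(x) = x for all x ∈ F_q. Regard each V_h, B_h, Z_h, H'_h as F_q-vector spaces by restriction of scalars. Then ζ̃ = φ ∘ ζ is an F_q-multilinear form on V_1 × ⋯ × V_r that is coboundary-invariant on H' (over F_q), and the subrank over F_q of the induced form ζ̃_{H'} is at least the subrank over F_{q^m} of ζ_{H'}. -/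
open scoped BigOperators

/-- alphabet reduction for coboundary-invariant multilinear forms;
Lemma 3.30.  Let `K = F_{q^m}` be the degree-`m` extension of the finite field `F = F_q`
(`m ≥ 2`), and let `V₁, …, V_r` (`r ≥ 2`) be finite-dimensional `K`-vector spaces, regarded
also as `F`-vector spaces by restriction of scalars.  Subspaces `H'_h` of the quotients
`Z_h/B_h` are represented by intermediate subspaces `W_h` with `B_h ≤ W_h ≤ Z_h`.  Suppose
the `K`-multilinear form `ζ` is coboundary-invariant on `H'`, and fix an `F`-linear
`φ : K → F` restricting to the identity on `F`.  Then `ζ̃ = φ ∘ ζ` is an `F`-multilinear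
form that is coboundary-invariant on `H'`, and the subrank (over `F`) of the induced form
`ζ̃_{H'}` is at least the subrank (over `K`) of `ζ_{H'}`. -/
theorem stmt18 (F K : Type) [Field F] [Fintype F] [Field K] [Fintype K] [Algebra F K]
    (m : ℕ) (hm : 2 ≤ m) (hdeg : Module.finrank F K = m)
    (r : ℕ) (hr : 2 ≤ r)
    (V : Fin r → Type) [∀ h, AddCommGroup (V h)] [∀ h, Module K (V h)]
    [∀ h, Module F (V h)] [∀ h, IsScalarTower F K (V h)]
    [∀ h, FiniteDimensional K (V h)]
    (B Z W : ∀ h, Submodule K (V h)) (hBW : ∀ h, B h ≤ W h) (hWZ : ∀ h, W h ≤ Z h)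
    (ζ : MultilinearMap K V K)
    (hinv : ∀ z b : ∀ h, V h, (∀ h, z h ∈ W h) → (∀ h, b h ∈ B h) →
      ζ (fun h => z h + b h) = ζ z)
    (φ : K →ₗ[F] F) (hφ : ∀ x : F, φ (algebraMap F K x) = x) :
    ∃ ζt : MultilinearMap F V F,
      (∀ v, ζt v = φ (ζ v)) ∧
      (∀ z b : ∀ h, V h, (∀ h, z h ∈ W h) → (∀ h, b h ∈ B h) →
        ζt (fun h => z h + b h) = ζt z) ∧
      ∀ s : ℕ,
        (∃ v : ∀ h, Fin s → V h, (∀ h j, v h j ∈ W h) ∧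
            ∀ jj : Fin r → Fin s,
              ζ (fun h => v h (jj h)) = if ∀ h, jj h = jj ⟨0, by omega⟩ then 1 else 0) →
        (∃ v : ∀ h, Fin s → V h, (∀ h j, v h j ∈ W h) ∧
            ∀ jj : Fin r → Fin s,
              ζt (fun h => v h (jj h)) = if ∀ h, jj h = jj ⟨0, by omega⟩ then 1 else 0) := by
  refine ⟨φ.compMultilinearMap (ζ.restrictScalars F), fun v => rfl, ?_, ?_⟩
  · intro z b hz hb
    show φ (ζ fun h => z h + b h) = φ (ζ z)
    rw [hinv z b hz hb]
  · rintro s ⟨v, hv, hδ⟩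
    refine ⟨v, hv, fun jj => ?_⟩
    show φ (ζ fun h => v h (jj h)) = _
    rw [hδ jj]
    split
    · rw [show (1 : K) = algebraMap F K 1 by simp, hφ]
    · simp
end
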